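/- Let ρ be a state and σ a positive definite matrix on ℂ^d, and let 0 < η < ε < 1. Then D_H^{ε−η}(ρ‖σ) + log η ≤ D̄_s^{1−ε}(ρ‖σ) ≤ D_H^ε(ρ‖σ). -/

import Mathlib

open Matrix
open scoped ComplexOrder

noncomputable section

/-- Positive part `C₊` of a Hermitian matrix, obtained by applying `x ↦ max x 0` to the
eigenvalues in a spectral decomposition (junk value `0` for non-Hermitian input). -/
def matPos {n : Type*} [Fintype n] [DecidableEq n] (A : Matrix n n ℂ) : Matrix n n ℂ :=
  if hA : A.IsHermitian then
    (hA.eigenvectorUnitary : Matrix n n ℂ) *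
      Matrix.diagonal (fun i => ((max (hA.eigenvalues i) 0 : ℝ) : ℂ)) *
      star (hA.eigenvectorUnitary : Matrix n n ℂ)
  else 0

/-- `Tr C₊` as a real number. -/
def trPos {n : Type*} [Fintype n] [DecidableEq n] (A : Matrix n n ℂ) : ℝ :=
  (matPos A).trace.re

/-- Spectral projection of a Hermitian matrix onto `[0, ∞)` (junk value `0` for
non-Hermitian input). -/
def projNonneg {n : Type*} [Fintype n] [DecidableEq n] (A : Matrix n n ℂ) : Matrix n n ℂ :=
  if hA : A.IsHermitian then
    (hA.eigenvectorUnitary : Matrix n n ℂ) *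
      Matrix.diagonal (fun i => if 0 ≤ hA.eigenvalues i then (1 : ℂ) else 0) *
      star (hA.eigenvectorUnitary : Matrix n n ℂ)
  else 0

/-- The information spectrum relative entropy `D̲_s^ε(ρ‖σ)`. -/
def Dlow {n : Type*} [Fintype n] [DecidableEq n] (ε : ℝ) (ρ σ : Matrix n n ℂ) : ℝ :=
  sSup {γ : ℝ | 1 - ε ≤ trPos (ρ - (2 : ℝ) ^ γ • σ)}

/-- The information spectrum relative entropy `D̄_s^ε(ρ‖σ)`. -/
def Dhigh {n : Type*} [Fintype n] [DecidableEq n] (ε : ℝ) (ρ σ : Matrix n n ℂ) : ℝ :=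
  sInf {γ : ℝ | trPos (ρ - (2 : ℝ) ^ γ • σ) ≤ ε}

/-- The hypothesis testing relative entropy
`D_H^ε(ρ‖σ) = −log inf{Tr(Qσ) : 0 ≤ Q ≤ 1, Tr(Qρ) ≥ 1 − ε}` (logarithm to base 2). -/
def DH {n : Type*} [Fintype n] [DecidableEq n] (ε : ℝ) (ρ σ : Matrix n n ℂ) : ℝ :=
  - Real.logb 2 (sInf {r : ℝ | ∃ Q : Matrix n n ℂ, Q.PosSemidef ∧
      ((1 : Matrix n n ℂ) - Q).PosSemidef ∧ 1 - ε ≤ (Q * ρ).trace.re ∧ r = (Q * σ).trace.re})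

/-!
For `A = ρ - 2^γ σ`, the trace of the positive part bounds every test, `Tr(QA) ≤ Tr A₊` for
`0 ≤ Q ≤ 1`, with equality for the spectral projection `P` of `A` onto `[0, ∞)`.
If `Tr A₊ ≤ 1 - ε`, every test with `Tr(Qρ) ≥ 1 - ε + η` therefore has `Tr(Qσ) ≥ η 2^{-γ}`,
which is the lower bound. If `Tr A₊ > 1 - ε`, then `P` is a test with `Tr(Pρ) ≥ 1 - ε` and
`Tr(Pσ) < 2^{-γ}`, so `γ < D_H^ε`; hence `D_H^ε` itself lies in the set whose infimum is
`D̄_s^{1-ε}`. Since `σ` is positive definite, `c ρ ≤ σ` for some `c > 0`: this keeps the infimum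
in `D_H^ε` positive and makes the set defining `D̄_s^{1-ε}` nonempty.
-/

open scoped MatrixOrder

section Spectral

variable {n : Type*} [Fintype n] [DecidableEq n] {A : Matrix n n ℂ}

lemma matPos_eq_cfc (hA : A.IsHermitian) : matPos A = cfc (fun x : ℝ => max x 0) A := by
  rw [hA.cfc_eq, matPos, dif_pos hA, IsHermitian.cfc, Unitary.conjStarAlgAut_apply]
  rfl

lemma projNonneg_eq_cfc (hA : A.IsHermitian) :
    projNonneg A = cfc (fun x : ℝ => if 0 ≤ x then 1 else 0) A := by
  rw [hA.cfc_eq, projNonneg, dif_pos hA, IsHermitian.cfc, Unitary.conjStarAlgAut_apply]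
  congr 3
  ext i
  split_ifs with h <;> simp [h]

lemma le_matPos (hA : A.IsHermitian) : A ≤ matPos A := by
  have : IsSelfAdjoint A := hA
  rw [matPos_eq_cfc hA]
  conv_lhs => rw [← cfc_id ℝ A]
  exact cfc_mono fun x _ => le_max_left x 0

lemma matPos_nonneg (hA : A.IsHermitian) : 0 ≤ matPos A := by
  rw [matPos_eq_cfc hA]
  exact cfc_nonneg fun x _ => le_max_right x 0

lemma projNonneg_nonneg (hA : A.IsHermitian) : 0 ≤ projNonneg A := by
  rw [projNonneg_eq_cfc hA]
  exact cfc_nonneg fun x _ => by split_ifs <;> norm_num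

lemma projNonneg_le_one (hA : A.IsHermitian) : projNonneg A ≤ 1 := by
  rw [projNonneg_eq_cfc hA]
  exact cfc_le_one _ _ fun x _ => by split_ifs <;> norm_num

lemma projNonneg_mul_self (hA : A.IsHermitian) : projNonneg A * A = matPos A := by
  have : IsSelfAdjoint A := hA
  rw [projNonneg_eq_cfc hA, matPos_eq_cfc hA]
  nth_rewrite 2 [← cfc_id' ℝ A]
  rw [← cfc_mul _ _ _ (A.finite_real_spectrum.continuousOn _)]
  refine cfc_congr fun x _ => ?_
  split_ifs with hx
  · simp [hx]
  · simp [(not_le.mp hx).le]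

end Spectral

section Trace

variable {n : Type*} [Fintype n]

lemma re_trace_mul_sub_smul (Q A B : Matrix n n ℂ) (t : ℝ) :
    (Q * (A - t • B)).trace.re = (Q * A).trace.re - t * (Q * B).trace.re := by
  rw [Matrix.mul_sub, Matrix.mul_smul, trace_sub, trace_smul, Complex.sub_re, Complex.smul_re,
    smul_eq_mul]

variable [DecidableEq n]

lemma re_trace_mul_nonneg {A B : Matrix n n ℂ} (hA : 0 ≤ A) (hB : 0 ≤ B) :
    0 ≤ (A * B).trace.re := by
  obtain ⟨X, rfl⟩ := CStarAlgebra.nonneg_iff_eq_star_mul_self.mp hB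
  have hXAX : 0 ≤ X * A * star X := star_right_conjugate_nonneg hA X
  rw [← Matrix.mul_assoc, trace_mul_comm, ← Matrix.mul_assoc]
  exact (Complex.nonneg_iff.mp hXAX.posSemidef.trace_nonneg).1

lemma re_trace_mul_le_mul_left {Q A B : Matrix n n ℂ} (hQ : 0 ≤ Q) (hAB : A ≤ B) :
    (Q * A).trace.re ≤ (Q * B).trace.re := by
  have := re_trace_mul_nonneg hQ (sub_nonneg.mpr hAB)
  rw [Matrix.mul_sub, trace_sub, Complex.sub_re] at this
  linarith

lemma re_trace_mul_le_mul_right {A B C : Matrix n n ℂ} (hAB : A ≤ B) (hC : 0 ≤ C) :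
    (A * C).trace.re ≤ (B * C).trace.re := by
  have := re_trace_mul_nonneg (sub_nonneg.mpr hAB) hC
  rw [Matrix.sub_mul, trace_sub, Complex.sub_re] at this
  linarith

end Trace

section PositivePart

variable {n : Type*} [Fintype n] [DecidableEq n] {A : Matrix n n ℂ}

lemma re_trace_mul_le_trPos {Q : Matrix n n ℂ} (hQ₀ : 0 ≤ Q) (hQ₁ : Q ≤ 1)
    (hA : A.IsHermitian) : (Q * A).trace.re ≤ trPos A :=
  calc (Q * A).trace.re ≤ (Q * matPos A).trace.re := re_trace_mul_le_mul_left hQ₀ (le_matPos hA)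
    _ ≤ (1 * matPos A).trace.re := re_trace_mul_le_mul_right hQ₁ (matPos_nonneg hA)
    _ = trPos A := by rw [Matrix.one_mul, trPos]

lemma re_trace_projNonneg_mul (hA : A.IsHermitian) : (projNonneg A * A).trace.re = trPos A := by
  rw [projNonneg_mul_self hA, trPos]

lemma trPos_nonpos (hA : A ≤ 0) : trPos A ≤ 0 := by
  have hA' : A.IsHermitian := by
    simpa using (neg_nonneg.mpr hA).posSemidef.isHermitian.neg
  rw [← re_trace_projNonneg_mul hA']
  simpa using re_trace_mul_le_mul_left (projNonneg_nonneg hA') hA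

end PositivePart

section Comparison

variable {n : Type*} [Fintype n] [DecidableEq n]

lemma Matrix.PosDef.exists_pos_smul_le {ρ σ : Matrix n n ℂ} (hσ : σ.PosDef)
    (hρ : ρ.IsHermitian) : ∃ c : ℝ, 0 < c ∧ c • ρ ≤ σ := by
  cases isEmpty_or_nonempty n
  · exact ⟨1, one_pos, (Subsingleton.elim _ _ : (1 : ℝ) • ρ = σ).le⟩
  have hρ' : IsSelfAdjoint ρ := hρ
  have hσ' : IsSelfAdjoint σ := hσ.isHermitian
  obtain ⟨r, hr, hrσ⟩ := (CFC.exists_pos_algebraMap_le_iff hσ').mpr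
    fun x hx => hσ.isStrictlyPositive.spectrum_pos hx
  obtain ⟨M, hM⟩ := ρ.finite_real_spectrum.bddAbove
  set M' := max M 1
  have hM' : 0 < M' := lt_max_of_lt_right one_pos
  have hρM : ρ ≤ algebraMap ℝ _ M' :=
    le_algebraMap_of_spectrum_le fun x hx => (hM hx).trans (le_max_left _ _)
  refine ⟨r / M', div_pos hr hM', ?_⟩
  calc (r / M') • ρ ≤ (r / M') • algebraMap ℝ (Matrix n n ℂ) M' :=
        smul_le_smul_of_nonneg_left hρM (div_pos hr hM').le
    _ = algebraMap ℝ _ r := by rw [Algebra.smul_def, ← map_mul, div_mul_cancel₀ r hM'.ne']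
    _ ≤ σ := hrσ

end Comparison

section HypothesisTesting

variable {n : Type*} [Fintype n] [DecidableEq n] {ε : ℝ} {ρ σ : Matrix n n ℂ}

def typeIIErrors (ε : ℝ) (ρ σ : Matrix n n ℂ) : Set ℝ :=
  {r | ∃ Q : Matrix n n ℂ, 0 ≤ Q ∧ Q ≤ 1 ∧ 1 - ε ≤ (Q * ρ).trace.re ∧ r = (Q * σ).trace.re}

lemma DH_eq_neg_logb_sInf_typeIIErrors :
    DH ε ρ σ = -Real.logb 2 (sInf (typeIIErrors ε ρ σ)) := by
  simp only [DH, typeIIErrors, le_iff, sub_zero]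

lemma trace_mem_typeIIErrors (hρ : ρ.trace = 1) (hε : 0 ≤ ε) :
    σ.trace.re ∈ typeIIErrors ε ρ σ :=
  ⟨1, zero_le_one, le_rfl, by simp [hρ, hε], by simp⟩

lemma le_mul_of_mem_typeIIErrors (hρ : ρ.IsHermitian) (hσ : σ.IsHermitian) {t δ r : ℝ}
    (ht : trPos (ρ - t • σ) ≤ δ) (hr : r ∈ typeIIErrors ε ρ σ) : 1 - ε - δ ≤ t * r := by
  obtain ⟨Q, hQ₀, hQ₁, hQρ, rfl⟩ := hr
  have := re_trace_mul_le_trPos hQ₀ hQ₁ (hρ.sub (hσ.smul (IsSelfAdjoint.all t)))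
  rw [re_trace_mul_sub_smul] at this
  linarith

lemma mul_le_of_mem_typeIIErrors {c r : ℝ} (hc₀ : 0 ≤ c) (hc : c • ρ ≤ σ)
    (hr : r ∈ typeIIErrors ε ρ σ) : c * (1 - ε) ≤ r := by
  obtain ⟨Q, hQ₀, -, hQρ, rfl⟩ := hr
  calc c * (1 - ε) ≤ c * (Q * ρ).trace.re := mul_le_mul_of_nonneg_left hQρ hc₀
    _ = (Q * (c • ρ)).trace.re := by
      rw [Matrix.mul_smul, trace_smul, Complex.smul_re, smul_eq_mul]
    _ ≤ (Q * σ).trace.re := re_trace_mul_le_mul_left hQ₀ hc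

lemma bddBelow_typeIIErrors (hσ : 0 ≤ σ) : BddBelow (typeIIErrors ε ρ σ) :=
  ⟨0, fun _ ⟨_, hQ₀, _, _, hr⟩ => hr ▸ re_trace_mul_nonneg hQ₀ hσ⟩

lemma sInf_typeIIErrors_pos (hρ : ρ.IsHermitian) (hρtr : ρ.trace = 1) (hσ : σ.PosDef)
    (hε₀ : 0 ≤ ε) (hε₁ : ε < 1) : 0 < sInf (typeIIErrors ε ρ σ) := by
  obtain ⟨c, hc₀, hc⟩ := hσ.exists_pos_smul_le hρ
  exact (mul_pos hc₀ (sub_pos.mpr hε₁)).trans_le <|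
    le_csInf ⟨_, trace_mem_typeIIErrors hρtr hε₀⟩ fun _ hr =>
      mul_le_of_mem_typeIIErrors hc₀.le hc hr

end HypothesisTesting

section InformationSpectrum

variable {n : Type*} [Fintype n] [DecidableEq n] {ε : ℝ} {ρ σ : Matrix n n ℂ}

lemma exists_trPos_sub_rpow_smul_nonpos (hρ : ρ.IsHermitian) (hσ : σ.PosDef) :
    ∃ γ : ℝ, trPos (ρ - (2 : ℝ) ^ γ • σ) ≤ 0 := by
  obtain ⟨c, hc₀, hc⟩ := hσ.exists_pos_smul_le hρ
  refine ⟨Real.logb 2 c⁻¹, trPos_nonpos (sub_nonpos.mpr ?_)⟩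
  rw [Real.rpow_logb two_pos (by norm_num) (inv_pos.mpr hc₀)]
  simpa [smul_smul, inv_mul_cancel₀ hc₀.ne'] using
    smul_le_smul_of_nonneg_left hc (inv_nonneg.mpr hc₀.le)

lemma DH_add_logb_le {γ η : ℝ} (hρ : ρ.IsHermitian) (hρtr : ρ.trace = 1) (hσ : σ.IsHermitian)
    (hη₀ : 0 < η) (hηε : η ≤ ε) (hγ : trPos (ρ - (2 : ℝ) ^ γ • σ) ≤ 1 - ε) :
    DH (ε - η) ρ σ + Real.logb 2 η ≤ γ := by
  have h2γ : 0 < (2 : ℝ) ^ γ := Real.rpow_pos_of_pos two_pos γ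
  have hinf : η / (2 : ℝ) ^ γ ≤ sInf (typeIIErrors (ε - η) ρ σ) := by
    refine le_csInf ⟨_, trace_mem_typeIIErrors hρtr (sub_nonneg.mpr hηε)⟩ fun r hr => ?_
    rw [div_le_iff₀' h2γ]
    linarith [le_mul_of_mem_typeIIErrors hρ hσ hγ hr]
  have hlog := Real.logb_le_logb_of_le one_lt_two (div_pos hη₀ h2γ) hinf
  rw [Real.logb_div hη₀.ne' h2γ.ne', Real.logb_rpow two_pos (by norm_num)] at hlog
  rw [DH_eq_neg_logb_sInf_typeIIErrors]
  linarith

lemma lt_DH_of_lt_trPos {γ : ℝ} (hρ : 0 ≤ ρ) (hρtr : ρ.trace = 1) (hσ : σ.PosDef)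
    (hε₀ : 0 ≤ ε) (hε₁ : ε < 1) (hγ : 1 - ε < trPos (ρ - (2 : ℝ) ^ γ • σ)) :
    γ < DH ε ρ σ := by
  have hA : (ρ - (2 : ℝ) ^ γ • σ).IsHermitian :=
    hρ.posSemidef.isHermitian.sub (hσ.isHermitian.smul (IsSelfAdjoint.all _))
  set P := projNonneg (ρ - (2 : ℝ) ^ γ • σ)
  have hP : (P * ρ).trace.re - (2 : ℝ) ^ γ * (P * σ).trace.re =
      trPos (ρ - (2 : ℝ) ^ γ • σ) := by
    rw [← re_trace_mul_sub_smul, re_trace_projNonneg_mul hA]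
  have hPσ : 0 ≤ (P * σ).trace.re :=
    re_trace_mul_nonneg (projNonneg_nonneg hA) hσ.posSemidef.nonneg
  have hPρ : (P * ρ).trace.re ≤ 1 := by
    simpa [hρtr] using re_trace_mul_le_mul_right (projNonneg_le_one hA) hρ
  have h2γ : 0 < (2 : ℝ) ^ γ := Real.rpow_pos_of_pos two_pos γ
  have hmem : (P * σ).trace.re ∈ typeIIErrors ε ρ σ :=
    ⟨P, projNonneg_nonneg hA, projNonneg_le_one hA, by linarith [mul_nonneg h2γ.le hPσ], rfl⟩
  have hpos := sInf_typeIIErrors_pos hρ.posSemidef.isHermitian hρtr hσ hε₀ hε₁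
  have hinf : sInf (typeIIErrors ε ρ σ) < ((2 : ℝ) ^ γ)⁻¹ := by
    refine (csInf_le (bddBelow_typeIIErrors hσ.posSemidef.nonneg) hmem).trans_lt ?_
    rw [← one_div, lt_div_iff₀ h2γ]
    linarith
  rw [DH_eq_neg_logb_sInf_typeIIErrors, lt_neg, Real.logb_lt_iff_lt_rpow one_lt_two hpos,
    Real.rpow_neg zero_le_two]
  exact hinf

end InformationSpectrum

/-- Equivalence of `D̄_s` with the hypothesis testing relative entropy:
`D_H^{ε−η}(ρ‖σ) + log η ≤ D̄_s^{1−ε}(ρ‖σ) ≤ D_H^ε(ρ‖σ)` for `0 < η < ε < 1`. -/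
theorem Dhigh_DH_bounds {d : ℕ} (ρ σ : Matrix (Fin d) (Fin d) ℂ)
    (hρ : ρ.PosSemidef) (hρtr : ρ.trace = 1) (hσ : σ.PosDef)
    (ε η : ℝ) (hη0 : 0 < η) (hηε : η < ε) (hε1 : ε < 1) :
    DH (ε - η) ρ σ + Real.logb 2 η ≤ Dhigh (1 - ε) ρ σ ∧ Dhigh (1 - ε) ρ σ ≤ DH ε ρ σ := by
  have hlow : ∀ γ ∈ {γ : ℝ | trPos (ρ - (2 : ℝ) ^ γ • σ) ≤ 1 - ε},
      DH (ε - η) ρ σ + Real.logb 2 η ≤ γ := fun γ hγ =>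
    DH_add_logb_le hρ.isHermitian hρtr hσ.isHermitian hη0 hηε.le hγ
  obtain ⟨γ₀, hγ₀⟩ := exists_trPos_sub_rpow_smul_nonpos hρ.isHermitian hσ
  refine ⟨le_csInf ⟨γ₀, hγ₀.trans (by linarith)⟩ hlow, csInf_le ⟨_, hlow⟩ ?_⟩
  by_contra h
  exact (lt_DH_of_lt_trPos hρ.nonneg hρtr hσ (by linarith) hε1 (not_le.mp h)).false
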